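/- For every tuple 𝔸 = (A₁, …, Aₙ) of d×d positive-definite matrices, the function F₁(·; 𝔸) attains its infimum on ℙ_d; that is, there exists M ∈ ℙ_d such that F₁(M; 𝔸) ≤ F₁(X; 𝔸) for all X ∈ ℙ_d. -/

import Mathlib

noncomputable section

open Matrix
open scoped ComplexOrder

/-- Real functional calculus of a matrix, via the Hermitian eigendecomposition
(junk value `0` if the matrix is not Hermitian). -/
noncomputable def fcal {d : ℕ} (f : ℝ → ℝ) (A : Matrix (Fin d) (Fin d) ℂ) :
    Matrix (Fin d) (Fin d) ℂ :=
  if hA : A.IsHermitian then hA.cfc f else 0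

/-- Matrix logarithm of a positive-definite matrix (functional calculus). -/
noncomputable def mlog {d : ℕ} (A : Matrix (Fin d) (Fin d) ℂ) : Matrix (Fin d) (Fin d) ℂ :=
  fcal Real.log A

/-- Real power of a positive-definite matrix (functional calculus). -/
noncomputable def mpow {d : ℕ} (A : Matrix (Fin d) (Fin d) ℂ) (t : ℝ) :
    Matrix (Fin d) (Fin d) ℂ :=
  fcal (fun x => x ^ t) A

/-- Frobenius (Hilbert–Schmidt) norm of a matrix. -/
noncomputable def hsNorm {d : ℕ} (A : Matrix (Fin d) (Fin d) ℂ) : ℝ :=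
  Real.sqrt (∑ i, ∑ j, ‖A i j‖ ^ 2)

/-- The Riemannian trace-metric distance δ(A, B) = ‖log (A^{-1/2} B A^{-1/2})‖_HS. -/
noncomputable def rdist {d : ℕ} (A B : Matrix (Fin d) (Fin d) ℂ) : ℝ :=
  hsNorm (mlog (mpow A (-(1 / 2 : ℝ)) * B * mpow A (-(1 / 2 : ℝ))))

/-- The t-weighted geometric mean A #_t B = A^{1/2} (A^{-1/2} B A^{-1/2})^t A^{1/2}. -/
noncomputable def gmean {d : ℕ} (A B : Matrix (Fin d) (Fin d) ℂ) (t : ℝ) :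
    Matrix (Fin d) (Fin d) ℂ :=
  mpow A (1 / 2 : ℝ) * mpow (mpow A (-(1 / 2 : ℝ)) * B * mpow A (-(1 / 2 : ℝ))) t *
    mpow A (1 / 2 : ℝ)

/-- The objective function F_p(X; 𝔸) = (1/n) ∑ₖ δ(X, Aₖ)^p. -/
noncomputable def Fobj {d n : ℕ} (p : ℝ) (A : Fin n → Matrix (Fin d) (Fin d) ℂ)
    (X : Matrix (Fin d) (Fin d) ℂ) : ℝ :=
  (1 / (n : ℝ)) * ∑ k, rdist X (A k) ^ p

/-!
Fix `B = A₀` and `R = n F₁(B; 𝔸)`. If `F₁(X) ≤ F₁(B)` then `δ(X, B) ≤ R`, so every eigenvalue `λ`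
of `X^{-1/2} B X^{-1/2}` satisfies `|log λ| ≤ R`; conjugating by `X^{1/2}` this becomes the Loewner
bound `e^{-R} B ≤ X ≤ e^R B`. That Loewner interval is compact and consists of positive-definite
matrices, on which `F₁` is continuous by continuity of the continuous functional calculus. So `F₁`
attains its minimum over the interval, and this minimum is global.
-/

section Frobenius

attribute [local instance] Matrix.frobeniusNormedAddCommGroup Matrix.frobeniusNormedSpace

variable {d : ℕ}

lemma hsNorm_eq_frobenius_norm (H : Matrix (Fin d) (Fin d) ℂ) : hsNorm H = ‖H‖ := by
  rw [hsNorm, Matrix.frobenius_norm_def, Real.sqrt_eq_rpow]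
  simp_rw [Real.rpow_two]

lemma continuous_hsNorm : Continuous (hsNorm (d := d)) := by
  simp_rw [funext hsNorm_eq_frobenius_norm]
  exact continuous_norm

lemma abs_le_hsNorm_of_mem_spectrum {H : Matrix (Fin d) (Fin d) ℂ} (hH : H.IsHermitian) {x : ℝ}
    (hx : x ∈ spectrum ℝ H) : |x| ≤ hsNorm H := by
  rw [hH.spectrum_real_eq_range_eigenvalues] at hx
  obtain ⟨i, rfl⟩ := hx
  set v := Matrix.replicateCol Unit ⇑(hH.eigenvectorBasis i)
  have hv : ‖v‖ = 1 := by
    rw [Matrix.frobenius_norm_replicateCol]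
    simp [hH.eigenvectorBasis.orthonormal.1 i]
  have hHv : H * v = hH.eigenvalues i • v := by
    rw [← Matrix.replicateCol_mulVec, hH.mulVec_eigenvectorBasis, Matrix.replicateCol_smul]
  have := Matrix.frobenius_norm_mul H v
  rw [hHv, norm_smul, hv, mul_one, mul_one, ← hsNorm_eq_frobenius_norm] at this
  simpa using this

end Frobenius

-- The operator norm serves only to make matrices a C⋆-algebra; its topology is the usual one.
open scoped Matrix.Norms.L2Operator MatrixOrder
open Set CFC

section CStarAlgebra

variable {A : Type*} [CStarAlgebra A] [PartialOrder A] [StarOrderedRing A]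

lemma ContinuousOn.cfc_of_isStrictlyPositive {X : Type*} [TopologicalSpace X] {f : ℝ → ℝ}
    (hf : ContinuousOn f (Ioi 0)) {a : X → A} {t : Set X} (ha : ContinuousOn a t)
    (hpos : ∀ x ∈ t, IsStrictlyPositive (a x)) :
    ContinuousOn (fun x => cfc f (a x)) t :=
  ha.cfc_of_mem_nhdsSet f
    (isOpen_Ioi.mem_nhdsSet.2 <| iUnion₂_subset fun x hx _ hy => (hpos x hx).spectrum_pos hy)
    (fun x hx => (hpos x hx).isSelfAdjoint) hf

lemma isCompact_Icc_of_nonneg [ProperSpace A] {a b : A} (ha : 0 ≤ a) : IsCompact (Icc a b) :=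
  Metric.isCompact_of_isClosed_isBounded isClosed_Icc <|
    (Metric.isBounded_closedBall (x := 0) (r := ‖b‖)).subset fun x hx => by
      rw [Metric.mem_closedBall, dist_zero_right]
      exact CStarAlgebra.norm_le_norm_of_nonneg_of_le (ha.trans hx.1) hx.2

lemma self_mem_Icc_exp_smul {b : A} (hb : 0 ≤ b) {r : ℝ} (hr : 0 ≤ r) :
    b ∈ Icc (Real.exp (-r) • b) (Real.exp r • b) := by
  constructor
  · simpa using smul_le_smul_of_nonneg_right (Real.exp_le_one_iff.2 (neg_nonpos.2 hr)) hb
  · simpa using smul_le_smul_of_nonneg_right (Real.one_le_exp hr) hb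

variable {a : A}

lemma isStrictlyPositive_conj (ha : IsStrictlyPositive a) {b : A} (hb : IsStrictlyPositive b) :
    IsStrictlyPositive (a ^ (-(1 / 2) : ℝ) * b * a ^ (-(1 / 2) : ℝ)) :=
  hb.conjugate_of_isUnit_of_isSelfAdjoint _ _ (ha.rpow _ _).isUnit (ha.rpow _ _).isSelfAdjoint

lemma rpow_half_mul_conj_mul_rpow_half (ha : IsStrictlyPositive a) (b : A) :
    a ^ (1 / 2 : ℝ) * (a ^ (-(1 / 2) : ℝ) * b * a ^ (-(1 / 2) : ℝ)) * a ^ (1 / 2 : ℝ) = b := by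
  calc _ = (a ^ (1 / 2 : ℝ) * a ^ (-(1 / 2) : ℝ)) * b * (a ^ (-(1 / 2) : ℝ) * a ^ (1 / 2 : ℝ)) := by
        simp only [mul_assoc]
    _ = b := by rw [rpow_mul_rpow_neg _ ha, ← neg_neg (1 / 2 : ℝ), rpow_neg_mul_rpow _ ha]; simp

lemma rpow_half_mul_algebraMap_mul_rpow_half (ha : IsStrictlyPositive a) (c : ℝ) :
    a ^ (1 / 2 : ℝ) * algebraMap ℝ A c * a ^ (1 / 2 : ℝ) = c • a := by
  rw [← Algebra.commutes, mul_assoc, ← rpow_add ha.isUnit, ← Algebra.smul_def]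
  norm_num [rpow_one a ha.nonneg]

lemma smul_le_of_algebraMap_le_conj (ha : IsStrictlyPositive a) {b : A} {c : ℝ}
    (h : algebraMap ℝ A c ≤ a ^ (-(1 / 2) : ℝ) * b * a ^ (-(1 / 2) : ℝ)) : c • a ≤ b := by
  simpa only [rpow_half_mul_algebraMap_mul_rpow_half ha, rpow_half_mul_conj_mul_rpow_half ha]
    using conjugate_le_conjugate_of_nonneg h (rpow_nonneg (a := a) (y := 1 / 2))

lemma le_smul_of_conj_le_algebraMap (ha : IsStrictlyPositive a) {b : A} {c : ℝ}
    (h : a ^ (-(1 / 2) : ℝ) * b * a ^ (-(1 / 2) : ℝ) ≤ algebraMap ℝ A c) : b ≤ c • a := by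
  simpa only [rpow_half_mul_algebraMap_mul_rpow_half ha, rpow_half_mul_conj_mul_rpow_half ha]
    using conjugate_le_conjugate_of_nonneg h (rpow_nonneg (a := a) (y := 1 / 2))

lemma mem_Icc_smul_of_spectrum_conj_subset (ha : IsStrictlyPositive a) {b : A}
    (hb : IsSelfAdjoint b) {c C : ℝ} (hc : 0 < c) (hC : 0 < C)
    (h : spectrum ℝ (a ^ (-(1 / 2) : ℝ) * b * a ^ (-(1 / 2) : ℝ)) ⊆ Icc c C) :
    a ∈ Icc (C⁻¹ • b) (c⁻¹ • b) := by
  have hM : IsSelfAdjoint (a ^ (-(1 / 2) : ℝ) * b * a ^ (-(1 / 2) : ℝ)) :=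
    hb.conjugate_self rpow_nonneg.isSelfAdjoint
  have hlo : c • a ≤ b := smul_le_of_algebraMap_le_conj ha <|
    (algebraMap_le_iff_le_spectrum hM).2 fun x hx => (h hx).1
  have hup : b ≤ C • a := le_smul_of_conj_le_algebraMap ha <|
    (le_algebraMap_iff_spectrum_le hM).2 fun x hx => (h hx).2
  constructor
  · simpa [smul_smul, hC.ne'] using smul_le_smul_of_nonneg_left hup (inv_nonneg.2 hC.le)
  · simpa [smul_smul, hc.ne'] using smul_le_smul_of_nonneg_left hlo (inv_nonneg.2 hc.le)

end CStarAlgebra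

section PosDef

variable {d : ℕ}

lemma fcal_eq_cfc (f : ℝ → ℝ) (X : Matrix (Fin d) (Fin d) ℂ) : fcal f X = cfc f X := by
  unfold fcal
  split_ifs with hX
  · exact (hX.cfc_eq f).symm
  · exact (cfc_apply_of_not_predicate X hX).symm

lemma rdist_eq_hsNorm_cfc_log {X : Matrix (Fin d) (Fin d) ℂ} (hX : 0 ≤ X)
    (B : Matrix (Fin d) (Fin d) ℂ) :
    rdist X B = hsNorm (cfc Real.log (X ^ (-(1 / 2) : ℝ) * B * X ^ (-(1 / 2) : ℝ))) := by
  rw [rdist, mlog, mpow, fcal_eq_cfc, fcal_eq_cfc, ← rpow_eq_cfc_real hX]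

lemma rdist_nonneg (X B : Matrix (Fin d) (Fin d) ℂ) : 0 ≤ rdist X B := Real.sqrt_nonneg _

lemma mem_Icc_of_rdist_le {X B : Matrix (Fin d) (Fin d) ℂ} (hX : X.PosDef) (hB : B.PosDef)
    {r : ℝ} (h : rdist X B ≤ r) : X ∈ Icc (Real.exp (-r) • B) (Real.exp r • B) := by
  set M := X ^ (-(1 / 2) : ℝ) * B * X ^ (-(1 / 2) : ℝ)
  have hM : IsStrictlyPositive M :=
    isStrictlyPositive_conj hX.isStrictlyPositive hB.isStrictlyPositive
  have hlog_cont : ContinuousOn Real.log (spectrum ℝ M) :=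
    Real.continuousOn_log.mono fun x hx => (hM.spectrum_pos hx).ne'
  have hlog : ∀ x ∈ spectrum ℝ M, |Real.log x| ≤ r := fun x hx =>
    (abs_le_hsNorm_of_mem_spectrum (cfc_predicate Real.log M)
      (cfc_map_spectrum Real.log M hM.isSelfAdjoint hlog_cont ▸ mem_image_of_mem _ hx)).trans
      (rdist_eq_hsNorm_cfc_log hX.posSemidef.nonneg B ▸ h)
  have := mem_Icc_smul_of_spectrum_conj_subset hX.isStrictlyPositive hB.isHermitian
    (Real.exp_pos (-r)) (Real.exp_pos r) fun x hx => by
      have hx₀ := hM.spectrum_pos hx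
      obtain ⟨h₁, h₂⟩ := abs_le.1 (hlog x hx)
      exact ⟨(Real.le_log_iff_exp_le hx₀).1 h₁, (Real.log_le_iff_le_exp hx₀).1 h₂⟩
  rwa [← Real.exp_neg, ← Real.exp_neg, neg_neg] at this

lemma continuousOn_rdist_left {B : Matrix (Fin d) (Fin d) ℂ} (hB : B.PosDef) :
    ContinuousOn (fun X => rdist X B) {X | X.PosDef} := by
  have hpow : ContinuousOn (fun X : Matrix (Fin d) (Fin d) ℂ => X ^ (-(1 / 2) : ℝ))
      {X | X.PosDef} :=
    (continuousOn_rpow _).mono fun X hX => hX.isStrictlyPositive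
  have hlog := ContinuousOn.cfc_of_isStrictlyPositive
    (Real.continuousOn_log.mono fun x hx => ne_of_gt hx) ((hpow.mul continuousOn_const).mul hpow)
    fun X hX => isStrictlyPositive_conj hX.isStrictlyPositive hB.isStrictlyPositive
  exact (continuous_hsNorm.comp_continuousOn hlog).congr fun X hX =>
    rdist_eq_hsNorm_cfc_log hX.posSemidef.nonneg B

variable {n : ℕ}

lemma continuousOn_Fobj {p : ℝ} (hp : 0 ≤ p) {A : Fin n → Matrix (Fin d) (Fin d) ℂ}
    (hA : ∀ k, (A k).PosDef) : ContinuousOn (Fobj p A) {X | X.PosDef} :=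
  continuousOn_const.mul <| continuousOn_finsetSum _ fun k _ =>
    (continuousOn_rdist_left (hA k)).rpow_const fun _ _ => Or.inr hp

lemma rdist_rpow_le_mul_Fobj (p : ℝ) (A : Fin n → Matrix (Fin d) (Fin d) ℂ)
    (X : Matrix (Fin d) (Fin d) ℂ) (k : Fin n) : rdist X (A k) ^ p ≤ n * Fobj p A X := by
  have hn : (n : ℝ) ≠ 0 := Nat.cast_ne_zero.2 (Fin.pos k).ne'
  rw [Fobj, ← mul_assoc, mul_one_div_cancel hn, one_mul]
  exact Finset.single_le_sum (fun j _ => Real.rpow_nonneg (rdist_nonneg X (A j)) p)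
    (Finset.mem_univ k)

end PosDef

lemma exists_isMinOn_of_sublevel_subset {β α : Type*} [TopologicalSpace β] [LinearOrder α]
    [TopologicalSpace α] [ClosedIicTopology α] {f : β → α} {s K : Set β} (hK : IsCompact K)
    (hKs : K ⊆ s) (hf : ContinuousOn f K) {x₀ : β} (hx₀ : x₀ ∈ K)
    (hsub : ∀ x ∈ s, f x ≤ f x₀ → x ∈ K) : ∃ m ∈ s, IsMinOn f s m := by
  obtain ⟨m, hmK, hm⟩ := hK.exists_isMinOn ⟨x₀, hx₀⟩ hf
  refine ⟨m, hKs hmK, fun x hx => ?_⟩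
  by_cases hxK : x ∈ K
  · exact hm hxK
  · exact (hm hx₀).trans (le_of_not_ge fun h => hxK (hsub x hx h))

/-- F₁(·; 𝔸) attains its infimum on ℙ_d. -/
theorem stmt0 {d n : ℕ} (hn : 0 < n) (A : Fin n → Matrix (Fin d) (Fin d) ℂ)
    (hA : ∀ k, (A k).PosDef) :
    ∃ M : Matrix (Fin d) (Fin d) ℂ, M.PosDef ∧
      ∀ X : Matrix (Fin d) (Fin d) ℂ, X.PosDef → Fobj 1 A M ≤ Fobj 1 A X := by
  set B := A ⟨0, hn⟩
  have hB : B.PosDef := hA _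
  set R := n * Fobj 1 A B
  have hR : 0 ≤ R :=
    (rdist_nonneg B B).trans (by simpa using rdist_rpow_le_mul_Fobj 1 A B ⟨0, hn⟩)
  set K := Icc (Real.exp (-R) • B) (Real.exp R • B)
  have hBK : B ∈ K := self_mem_Icc_exp_smul hB.posSemidef.nonneg hR
  have hKpos : K ⊆ {X | X.PosDef} := fun X hX =>
    ((hB.isStrictlyPositive.smul (Real.exp_pos _)).of_le hX.1).posDef
  have hsub (X : Matrix (Fin d) (Fin d) ℂ) (hX : X.PosDef) (hle : Fobj 1 A X ≤ Fobj 1 A B) :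
      X ∈ K :=
    mem_Icc_of_rdist_le hX hB <| by
      simpa using (rdist_rpow_le_mul_Fobj 1 A X _).trans
        (mul_le_mul_of_nonneg_left hle (Nat.cast_nonneg n))
  obtain ⟨M, hM, hmin⟩ := exists_isMinOn_of_sublevel_subset
    (isCompact_Icc_of_nonneg (smul_nonneg (Real.exp_pos _).le hB.posSemidef.nonneg)) hKpos
    ((continuousOn_Fobj zero_le_one hA).mono hKpos) hBK hsub
  exact ⟨M, hM, fun X hX => hmin hX⟩
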